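/- arXiv:2005.03387 — 2 statements merged into one kernel-verified Lean document; each statement's English description precedes it below -/
import Mathlib

section
/- Let R be an associative ring with identity and a ∈ R. Then a is a clear element if and only if there exists a unit u of R such that both u·a and a·u are clean elements of R. -/
/-!
Clean elements are clear (an idempotent `e` satisfies `e * 1 * e = e`), and being clear is
preserved by right multiplication with a unit, so `a = (a * u) * u⁻¹` is clear as soon as
`a * u` is clean. Conversely, if `a = r + w` with `r * u * r = r`, then `u * r` and `r * u` are
idempotent, which makes `u * a = u * r + u * w` and `a * u = r * u + w * u` clean.
-/

/-- An element `r` of a ring is unit-regular if `r = r * u * r` for some unit `u`. -/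
def IsUnitRegular {R : Type*} [Ring R] (r : R) : Prop :=
  ∃ u : R, IsUnit u ∧ r * u * r = r

/-- An element is clear if it is the sum of a unit-regular element and a unit. -/
def IsClearElem {R : Type*} [Ring R] (a : R) : Prop :=
  ∃ r u : R, IsUnitRegular r ∧ IsUnit u ∧ a = r + u

/-- A ring is clear if every element is clear. -/
def IsClearRing (R : Type*) [Ring R] : Prop :=
  ∀ a : R, IsClearElem a

/-- A clear element is nontrivial if the unit-regular summand is nonzero and not a unit. -/
def IsNontrivialClearElem {R : Type*} [Ring R] (a : R) : Prop :=
  ∃ r u : R, IsUnitRegular r ∧ IsUnit u ∧ a = r + u ∧ r ≠ 0 ∧ ¬ IsUnit r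

/-- A square matrix is full if the two-sided ideal it generates is the whole matrix ring. -/
def Matrix.IsFull {R : Type*} [Ring R] {n : ℕ} (A : Matrix (Fin n) (Fin n) R) : Prop :=
  TwoSidedIdeal.span {A} = ⊤

/-- A commutative ring is an elementary divisor ring if every rectangular matrix admits
diagonal reduction with successive divisibility of the diagonal entries. -/
def IsElementaryDivisorRing (R : Type*) [CommRing R] : Prop :=
  ∀ (m n : ℕ) (A : Matrix (Fin m) (Fin n) R),
    ∃ (P : Matrix (Fin m) (Fin m) R) (Q : Matrix (Fin n) (Fin n) R),
      IsUnit P ∧ IsUnit Q ∧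
      (∀ (i : Fin m) (j : Fin n), (i : ℕ) ≠ (j : ℕ) → (P * A * Q) i j = 0) ∧
      (∀ (k : ℕ) (h1 : k < m) (h2 : k < n) (h3 : k + 1 < m) (h4 : k + 1 < n),
        (P * A * Q) ⟨k, h1⟩ ⟨k, h2⟩ ∣ (P * A * Q) ⟨k + 1, h3⟩ ⟨k + 1, h4⟩)

/-- An element is clean if it is the sum of an idempotent and a unit. -/
def IsCleanElem {R : Type*} [Ring R] (a : R) : Prop :=
  ∃ e u : R, IsIdempotentElem e ∧ IsUnit u ∧ a = e + u

/-- A ring is clean if every element is clean. -/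
def IsCleanRing (R : Type*) [Ring R] : Prop :=
  ∀ a : R, IsCleanElem a

section Semigroup

variable {S : Type*} [Semigroup S] {r u : S}

theorem isIdempotentElem_mul_left_of_mul_mul_eq_self (h : r * u * r = r) :
    IsIdempotentElem (u * r) := by
  rw [IsIdempotentElem, mul_assoc, ← mul_assoc r, h]

theorem isIdempotentElem_mul_right_of_mul_mul_eq_self (h : r * u * r = r) :
    IsIdempotentElem (r * u) := by
  rw [IsIdempotentElem, ← mul_assoc, h]

end Semigroup

section Ring

variable {R : Type*} [Ring R]

theorem IsIdempotentElem.isUnitRegular {e : R} (he : IsIdempotentElem e) : IsUnitRegular e :=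
  ⟨1, isUnit_one, by rw [mul_one, he.eq]⟩

theorem IsCleanElem.isClearElem {a : R} (ha : IsCleanElem a) : IsClearElem a := by
  obtain ⟨e, w, he, hw, rfl⟩ := ha
  exact ⟨e, w, he.isUnitRegular, hw, rfl⟩

theorem IsUnitRegular.mul_unit {r v : R} (hr : IsUnitRegular r) (hv : IsUnit v) :
    IsUnitRegular (r * v) := by
  obtain ⟨u, hu, hur⟩ := hr
  obtain ⟨V, rfl⟩ := hv
  refine ⟨↑V⁻¹ * u, V⁻¹.isUnit.mul hu, ?_⟩
  calc r * V * (↑V⁻¹ * u) * (r * V) = r * (V * ↑V⁻¹) * u * r * V := by noncomm_ring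
    _ = r * V := by rw [V.mul_inv, mul_one, hur]

theorem IsClearElem.mul_unit {a v : R} (ha : IsClearElem a) (hv : IsUnit v) :
    IsClearElem (a * v) := by
  obtain ⟨r, w, hr, hw, rfl⟩ := ha
  exact ⟨r * v, w * v, hr.mul_unit hv, hw.mul hv, add_mul r w v⟩

theorem isClearElem_of_isCleanElem_mul_unit {a u : R} (hu : IsUnit u)
    (hau : IsCleanElem (a * u)) : IsClearElem a := by
  obtain ⟨U, rfl⟩ := hu
  simpa [mul_assoc] using hau.isClearElem.mul_unit U⁻¹.isUnit

theorem IsClearElem.exists_isUnit_isCleanElem_mul {a : R} (ha : IsClearElem a) :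
    ∃ u : R, IsUnit u ∧ IsCleanElem (u * a) ∧ IsCleanElem (a * u) := by
  obtain ⟨r, w, ⟨u, hu, hur⟩, hw, rfl⟩ := ha
  exact ⟨u, hu,
    ⟨u * r, u * w, isIdempotentElem_mul_left_of_mul_mul_eq_self hur, hu.mul hw, mul_add u r w⟩,
    ⟨r * u, w * u, isIdempotentElem_mul_right_of_mul_mul_eq_self hur, hw.mul hu, add_mul r w u⟩⟩

end Ring

theorem stmt_7 {R : Type*} [Ring R] (a : R) :
    IsClearElem a ↔
      ∃ u : R, IsUnit u ∧ IsCleanElem (u * a) ∧ IsCleanElem (a * u) :=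
  ⟨IsClearElem.exists_isUnit_isCleanElem_mul,
    fun ⟨_, hu, _, hau⟩ => isClearElem_of_isCleanElem_mul_unit hu hau⟩
end

section
/- Let R be a commutative elementary divisor ring and let A be a full 2×2 matrix over R (i.e. the two-sided ideal of R^{2×2} generated by A is all of R^{2×2}). Then there exist invertible matrices P, Q ∈ GL_2(R) and an element d ∈ R such that P·A·Q is the diagonal matrix with diagonal entries 1 and d. -/
/-!
Diagonal reduction turns `A` into `diag(a, a * c)`. Fullness is invariant under multiplication
by invertible matrices, and a full matrix whose entries all lie in a two-sided ideal `I` forces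
`I = ⊤` (the matrices with entries in `I` form a two-sided ideal containing it). Applied to the
ideal `(a)`, this makes `a` a unit, which a diagonal invertible matrix then scales to `1`.
-/

open Matrix

theorem TwoSidedIdeal.span_singleton_units_mul_mul {S : Type*} [Ring S] (u v : Sˣ) (a : S) :
    TwoSidedIdeal.span {(u : S) * a * v} = TwoSidedIdeal.span {a} := by
  have hmem : ∀ (u v : Sˣ) (a : S), (u : S) * a * v ∈ TwoSidedIdeal.span {a} := fun u v a =>
    TwoSidedIdeal.mul_mem_right _ _ _ <| TwoSidedIdeal.mul_mem_left _ _ _ <|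
      TwoSidedIdeal.subset_span rfl
  refine le_antisymm (TwoSidedIdeal.span_le.mpr (by simpa using hmem u v a))
    (TwoSidedIdeal.span_le.mpr ?_)
  simpa [mul_assoc] using hmem u⁻¹ v⁻¹ ((u : S) * a * v)

namespace Matrix.IsFull

variable {R : Type*} {n : ℕ}

theorem eq_top_of_forall_mem [Ring R] [NeZero n] {A : Matrix (Fin n) (Fin n) R}
    (hA : A.IsFull) {I : TwoSidedIdeal R} (h : ∀ i j, A i j ∈ I) : I = ⊤ := by
  have hle : TwoSidedIdeal.span {A} ≤ I.matrix (Fin n) :=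
    TwoSidedIdeal.span_le.mpr (Set.singleton_subset_iff.mpr h)
  have hone : (1 : Matrix (Fin n) (Fin n) R) ∈ I.matrix (Fin n) :=
    hle (hA ▸ TwoSidedIdeal.mem_top _)
  exact TwoSidedIdeal.eq_top _ (by simpa using (I.mem_matrix _ _).mp hone 0 0)

theorem isUnit_of_forall_dvd [CommRing R] [NeZero n] {A : Matrix (Fin n) (Fin n) R}
    (hA : A.IsFull) {a : R} (h : ∀ i j, a ∣ A i j) : IsUnit a := by
  have htop : (Ideal.span {a}).toTwoSided = ⊤ := hA.eq_top_of_forall_mem fun i j =>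
    Ideal.mem_toTwoSided.mpr (Ideal.mem_span_singleton.mpr (h i j))
  simpa using congrArg TwoSidedIdeal.asIdeal htop

theorem mul_mul [Ring R] {A P Q : Matrix (Fin n) (Fin n) R} (hA : A.IsFull)
    (hP : IsUnit P) (hQ : IsUnit Q) : (P * A * Q).IsFull := by
  obtain ⟨P, rfl⟩ := hP
  obtain ⟨Q, rfl⟩ := hQ
  rwa [IsFull, TwoSidedIdeal.span_singleton_units_mul_mul]

end Matrix.IsFull

theorem IsElementaryDivisorRing.exists_mul_mul_eq_diagonal_two {R : Type*} [CommRing R]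
    (hR : IsElementaryDivisorRing R) (A : Matrix (Fin 2) (Fin 2) R) :
    ∃ (P Q : Matrix (Fin 2) (Fin 2) R) (a c : R),
      IsUnit P ∧ IsUnit Q ∧ P * A * Q = diagonal ![a, a * c] := by
  obtain ⟨P, Q, hP, hQ, hoff, hdvd⟩ := hR 2 2 A
  obtain ⟨c, hc⟩ := hdvd 0 (by norm_num) (by norm_num) (by norm_num) (by norm_num)
  refine ⟨P, Q, (P * A * Q) 0 0, c, hP, hQ, ?_⟩
  ext i j
  fin_cases i <;> fin_cases j
  · rfl
  · exact hoff 0 1 (by decide)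
  · exact hoff 1 0 (by decide)
  · exact hc

theorem stmt_12 {R : Type*} [CommRing R] (hR : IsElementaryDivisorRing R)
    (A : Matrix (Fin 2) (Fin 2) R) (hfull : A.IsFull) :
    ∃ (P Q : Matrix (Fin 2) (Fin 2) R) (d : R),
      IsUnit P ∧ IsUnit Q ∧ P * A * Q = Matrix.diagonal ![1, d] := by
  obtain ⟨P, Q, a, c, hP, hQ, hB⟩ := hR.exists_mul_mul_eq_diagonal_two A
  have hfullB : (diagonal ![a, a * c]).IsFull := hB ▸ hfull.mul_mul hP hQ
  obtain ⟨u, rfl⟩ : IsUnit a := hfullB.isUnit_of_forall_dvd fun i j => by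
    fin_cases i <;> fin_cases j <;> simp
  refine ⟨diagonal ![((u⁻¹ : Rˣ) : R), 1] * P, Q, ↑u * c, ?_, hQ, ?_⟩
  · refine (isUnit_diagonal.mpr ?_).mul hP
    simp [Pi.isUnit_iff, Fin.forall_fin_two]
  · rw [Matrix.mul_assoc, Matrix.mul_assoc, ← Matrix.mul_assoc P, hB, diagonal_mul_diagonal]
    congr 1
    ext i
    fin_cases i <;> simp
end
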